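/- Let p be a prime and Q a finite group, and let W = Q ≀ ℤ/p = (Fin p → Q) ⋊ ℤ/p with the cyclic shift action. Then the number of elements of order p in W equals (d + 1)^p − 1 + (p − 1)·|Q|^{p−1}, where d is the number of elements of order p in Q. -/

import Mathlib

/-- The homomorphism `ℤ/n → G` sending `1` to an element `g` with `g ^ n = 1`. -/
noncomputable def zmodHom {G : Type*} [Group G] (n : ℕ) (g : G) (h : g ^ n = 1) :
    Multiplicative (ZMod n) →* G :=
  AddMonoidHom.toMultiplicativeLeft
    (ZMod.lift n ⟨zmultiplesHom (Additive G) (Additive.ofMul g), by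
      show ((n : ℤ) • Additive.ofMul g) = 0
      rw [← ofMul_zpow, zpow_natCast, h, ofMul_one]⟩)

/-- The automorphism of `ι → Q` induced by a permutation of the index set `ι`. -/
def permMulAut {ι : Type*} {Q : Type*} [Group Q] (σ : Equiv.Perm ι) : MulAut (ι → Q) where
  toFun f := f ∘ σ.symm
  invFun f := f ∘ σ
  left_inv f := by ext i; simp
  right_inv f := by ext i; simp
  map_mul' f g := rfl

/-- Permutations of the index set act on `ι → Q` by automorphisms. -/
def permHom (ι : Type*) (Q : Type*) [Group Q] : Equiv.Perm ι →* MulAut (ι → Q) where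
  toFun := permMulAut
  map_one' := by ext f i; rfl
  map_mul' σ τ := by ext f i; rfl

section

open Fin.NatCast Fin.CommRing

lemma finRotate_pow_self : ∀ p : ℕ, finRotate p ^ p = 1 := by
  intro p
  match p with
  | 0 => exact Subsingleton.elim _ _
  | (n+1) =>
    have key : ∀ k : ℕ, ∀ i : Fin (n+1), (finRotate (n+1) ^ k) i = i + (k : Fin (n+1)) := by
      intro k
      induction k with
      | zero => intro i; simp
      | succ m ih =>
        intro i
        rw [pow_succ, Equiv.Perm.mul_apply, ih, finRotate_succ_apply]
        push_cast
        ring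
    ext i
    rw [key (n+1) i]
    simp

end

/-- The action of `ℤ/p` on `Fin p → Q` by cyclically shifting the coordinates. -/
noncomputable def rotHom (p : ℕ) (Q : Type*) [Group Q] :
    Multiplicative (ZMod p) →* MulAut (Fin p → Q) :=
  zmodHom p (permHom (Fin p) Q (finRotate p))
    (by rw [← map_pow, finRotate_pow_self, map_one])

/-- The wreath product `Q ≀ ℤ/p = (Fin p → Q) ⋊ ℤ/p`, where `ℤ/p` acts by cyclically
shifting the coordinates. -/
noncomputable def WreathCyc (p : ℕ) (Q : Type*) [Group Q] :=
  (Fin p → Q) ⋊[rotHom p Q] Multiplicative (ZMod p)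

noncomputable instance (p : ℕ) (Q : Type*) [Group Q] : Group (WreathCyc p Q) :=
  inferInstanceAs (Group ((Fin p → Q) ⋊[rotHom p Q] Multiplicative (ZMod p)))

/-- The base subgroup `Q^p` of the wreath product `Q ≀ ℤ/p`. -/
noncomputable def wreathBase (p : ℕ) (Q : Type*) [Group Q] : Subgroup (WreathCyc p Q) :=
  (SemidirectProduct.inl : (Fin p → Q) →* (Fin p → Q) ⋊[rotHom p Q] Multiplicative (ZMod p)).range

/-- The image in `Q ≀ ℤ/p` of the generator `1` of `ℤ/p`. -/
noncomputable def wreathGen (p : ℕ) (Q : Type*) [Group Q] : WreathCyc p Q :=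
  (SemidirectProduct.inr : Multiplicative (ZMod p) →* (Fin p → Q) ⋊[rotHom p Q] Multiplicative (ZMod p))
    (Multiplicative.ofAdd (1 : ZMod p))

/-!
By primality, the elements of order `p` are the `w ≠ 1` with `w ^ p = 1`, so it suffices to count
solutions of `w ^ p = 1`, fibred over the `ℤ/p`-coordinate `k` of `w = (f, k)`. Over `k = 0` they
are the `f` with `f ^ p = 1`, i.e. `(d + 1) ^ p` tuples. For `k ≠ 0`, `w ^ p = (c, 0)`, where
`c i` is the product of the values of `f` along the `k`-orbit of `i`. Since `w` commutes with
`w ^ p`, `c (i - k)` is conjugate to `c i`, and `k` generates `ℤ/p`, so `w ^ p = 1` as soon as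
`c 0 = 1`. That is a single equation on a product in which each value of `f` occurs exactly once,
so it has `|Q| ^ (p - 1)` solutions.
-/

namespace SemidirectProduct

variable {N G : Type*} [Group N] [Group G] {φ : G →* MulAut N}

theorem right_pow (x : N ⋊[φ] G) (m : ℕ) : (x ^ m).right = x.right ^ m :=
  map_pow rightHom x m

theorem left_pow (x : N ⋊[φ] G) (m : ℕ) :
    (x ^ m).left = (List.ofFn fun j : Fin m => φ (x.right ^ (j : ℕ)) x.left).prod := by
  induction m with
  | zero => rfl
  | succ m ih =>
    rw [pow_succ', mul_left, ih, List.ofFn_succ, List.prod_cons, map_list_prod, List.map_ofFn]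
    simp [pow_succ', Function.comp_def]

theorem act_right_eq_conj_of_commute {n : N} {x : N ⋊[φ] G} (h : Commute (inl n) x) :
    φ x.right n = x.left⁻¹ * n * x.left := by
  have h' := congrArg left h.eq
  simp only [mul_left, left_inl, right_inl, map_one, MulAut.one_apply] at h'
  rw [mul_assoc, h', inv_mul_cancel_left]

theorem card_subtype_eq_sum [Finite N] [Fintype G] (P : N ⋊[φ] G → Prop) :
    Nat.card {x // P x} = ∑ g, Nat.card {n // P ⟨n, g⟩} := by
  rw [← Nat.card_sigma]
  exact Nat.card_congr
    { toFun x := ⟨x.1.right, x.1.left, x.2⟩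
      invFun y := ⟨⟨y.2.1, y.1⟩, y.2.2⟩ }

end SemidirectProduct

theorem card_orderOf_eq_prime_add_one {G : Type*} [Group G] [Finite G] {p : ℕ} [Fact p.Prime] :
    Nat.card {g : G // orderOf g = p} + 1 = Nat.card {g : G // g ^ p = 1} := by
  have hset : {g : G | g ^ p = 1} = insert 1 {g | orderOf g = p} := by
    ext g
    by_cases hg : g = 1
    · simp [hg]
    · simp [hg, orderOf_eq_prime_iff]
  have hone : (1 : G) ∉ {g : G | orderOf g = p} := by
    simp [eq_comm, (Fact.out : p.Prime).ne_one]
  rw [← Set.coe_ofPred, ← Set.coe_ofPred, Nat.card_coe_set_eq, Nat.card_coe_set_eq, hset,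
    Set.ncard_insert_of_notMem hone]

theorem card_pi_pow_eq_one (ι : Type*) [Finite ι] (Q : Type*) [Monoid Q] (m : ℕ) :
    Nat.card {f : ι → Q // f ^ m = 1} = Nat.card {q : Q // q ^ m = 1} ^ Nat.card ι := by
  rw [← Nat.card_fun]
  exact Nat.card_congr ((Equiv.subtypeEquivRight (q := fun f : ι → Q => ∀ i, f i ^ m = 1)
    fun f => funext_iff).trans (Equiv.subtypePiEquivPi (p := fun _ (q : Q) => q ^ m = 1)))

theorem card_list_prod_ofFn_eq_one (Q : Type*) [Group Q] [Finite Q] (m : ℕ) :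
    Nat.card {g : Fin m → Q // (List.ofFn g).prod = 1} = Nat.card Q ^ (m - 1) := by
  have := Fintype.ofFinite Q
  have e : {g : Fin m → Q // (List.ofFn g).prod = 1} ≃ Equiv.Perm.vectorsProdEqOne Q m :=
    (Equiv.vectorEquivFin Q m).symm.subtypeEquiv fun g => by
      simp [Equiv.Perm.VectorsProdEqOne.mem_iff, Equiv.vectorEquivFin]
  rw [Nat.card_congr e, Nat.card_eq_fintype_card, Equiv.Perm.VectorsProdEqOne.card,
    Nat.card_eq_fintype_card]

section PrimeCard

variable {A : Type*} [AddGroup A] {p : ℕ} [Fact p.Prime]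

theorem forall_of_forall_imp_add_of_card_eq_prime [Finite A] (hA : Nat.card A = p) {a : A}
    (ha : a ≠ 0) {S : A → Prop} (h0 : S 0) (hS : ∀ i, S i → S (i + a)) (i : A) : S i := by
  obtain ⟨m, rfl⟩ : ∃ m : ℕ, m • a = i := mem_multiples_iff_mem_zmultiples.2
    (zmultiples_eq_top_of_prime_card hA ha ▸ AddSubgroup.mem_top i)
  induction m with
  | zero => simpa using h0
  | succ m ih => simpa [succ_nsmul] using hS _ ih

theorem injective_fin_nsmul_of_card_eq_prime (hA : Nat.card A = p) {a : A} (ha : a ≠ 0) :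
    Function.Injective fun j : Fin p => (j : ℕ) • a := by
  have hord : addOrderOf a = p := addOrderOf_eq_prime (hA ▸ card_nsmul_eq_zero') ha
  intro i j hij
  exact Fin.ext (nsmul_injOn_Iio_addOrderOf (hord ▸ i.isLt) (hord ▸ j.isLt) hij)

end PrimeCard

theorem finRotate_eq_addRight (p : ℕ) [NeZero p] : finRotate p = Equiv.addRight 1 :=
  Equiv.ext finRotate_apply

theorem ZMod.finEquiv_symm_eq_val_nsmul (p : ℕ) [NeZero p] (k : ZMod p) :
    (ZMod.finEquiv p).symm k = k.val • 1 := by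
  conv_lhs => rw [← ZMod.natCast_zmod_val k, ← nsmul_one]
  rw [map_nsmul, map_one]

theorem zmodHom_ofAdd {G : Type*} [Group G] (n : ℕ) [NeZero n] (g : G) (h : g ^ n = 1)
    (k : ZMod n) : zmodHom n g h (Multiplicative.ofAdd k) = g ^ k.val := by
  conv_lhs => rw [← ZMod.intCast_zmod_cast k]
  rw [zmodHom, AddMonoidHom.toMultiplicativeLeft_apply_apply, toAdd_ofAdd, ZMod.lift_coe,
    ZMod.cast_eq_val]
  simp only [zmultiplesHom_apply, toMul_zsmul, toMul_ofMul, zpow_natCast]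

theorem rotHom_ofAdd_apply {p : ℕ} [NeZero p] {Q : Type*} [Group Q] (k : ZMod p)
    (f : Fin p → Q) (i : Fin p) :
    rotHom p Q (Multiplicative.ofAdd k) f i = f (i - (ZMod.finEquiv p).symm k) := by
  rw [rotHom, zmodHom_ofAdd, ← map_pow, finRotate_eq_addRight, Equiv.nsmul_addRight,
    ZMod.finEquiv_symm_eq_val_nsmul]
  exact congrArg f ((Equiv.symm_apply_eq _).2 (sub_add_cancel i _).symm)

section Wreath

variable {p : ℕ} {Q : Type*} [Group Q]

local notation "W" => (Fin p → Q) ⋊[rotHom p Q] Multiplicative (ZMod p)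

theorem wreath_pow_left_apply_zero [NeZero p] (f : Fin p → Q) (k : ZMod p) :
    ((⟨f, Multiplicative.ofAdd k⟩ : W) ^ p).left 0 =
      (List.ofFn fun j : Fin p => f (-((j : ℕ) • (ZMod.finEquiv p).symm k))).prod := by
  rw [SemidirectProduct.left_pow, Pi.list_prod_apply, List.map_ofFn]
  refine congrArg List.prod (congrArg List.ofFn (funext fun j => ?_))
  show rotHom p Q (Multiplicative.ofAdd k ^ (j : ℕ)) f 0 = _
  rw [← ofAdd_nsmul, rotHom_ofAdd_apply, map_nsmul, zero_sub]

variable [Fact p.Prime]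

theorem wreath_pow_eq_one_iff (f : Fin p → Q) {k : ZMod p} (hk : k ≠ 0) :
    (⟨f, Multiplicative.ofAdd k⟩ : W) ^ p = 1 ↔
      ((⟨f, Multiplicative.ofAdd k⟩ : W) ^ p).left 0 = 1 := by
  set x : W := ⟨f, Multiplicative.ofAdd k⟩
  set c := (x ^ p).left
  set s := (ZMod.finEquiv p).symm k
  have hx : x ^ p = SemidirectProduct.inl c := by
    refine SemidirectProduct.ext rfl ?_
    rw [SemidirectProduct.right_pow]
    show Multiplicative.ofAdd k ^ p = 1
    rw [← ofAdd_nsmul, nsmul_eq_mul, ZMod.natCast_self, zero_mul, ofAdd_zero]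
  have hconj := SemidirectProduct.act_right_eq_conj_of_commute (hx ▸ Commute.pow_self x p)
  have hshift (i : Fin p) : c (i - s) = (f i)⁻¹ * c i * f i := by
    have h := congrFun hconj i
    rwa [show x.right = Multiplicative.ofAdd k from rfl, rotHom_ofAdd_apply] at h
  refine ⟨fun h => by simp [c, h], fun h0 => ?_⟩
  rw [hx, map_eq_one_iff _ SemidirectProduct.inl_injective]
  have hs : -s ≠ 0 := by simpa [s] using hk
  ext i
  refine forall_of_forall_imp_add_of_card_eq_prime (S := fun i => c i = 1) (Nat.card_fin p) hs h0
    (fun i hi => ?_) i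
  rw [← sub_eq_add_neg, hshift, hi, mul_one, inv_mul_cancel]

theorem card_wreath_fiber_pow_eq_one [Finite Q] {k : ZMod p} (hk : k ≠ 0) :
    Nat.card {f : Fin p → Q // (⟨f, Multiplicative.ofAdd k⟩ : W) ^ p = 1} =
      Nat.card Q ^ (p - 1) := by
  have hs : (ZMod.finEquiv p).symm k ≠ 0 := by simpa using hk
  let σ : Fin p ≃ Fin p := Equiv.ofBijective _ (Finite.injective_iff_bijective.1
    (neg_injective.comp (injective_fin_nsmul_of_card_eq_prime (Nat.card_fin p) hs)))
  simp_rw [wreath_pow_eq_one_iff _ hk, wreath_pow_left_apply_zero]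
  rw [← card_list_prod_ofFn_eq_one Q p]
  exact Nat.card_congr ((Equiv.arrowCongr σ.symm (Equiv.refl Q)).subtypeEquiv fun f => Iff.rfl)

theorem card_wreath_fiber_one_pow_eq_one [Finite Q] :
    Nat.card {f : Fin p → Q // (⟨f, 1⟩ : W) ^ p = 1} = Nat.card {q : Q // q ^ p = 1} ^ p := by
  have hpi := card_pi_pow_eq_one (Fin p) Q p
  rw [Nat.card_fin] at hpi
  rw [← hpi]
  refine Nat.card_congr (Equiv.subtypeEquivRight fun f => ?_)
  rw [show (⟨f, 1⟩ : W) = SemidirectProduct.inl f from rfl, ← map_pow]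
  exact map_eq_one_iff _ SemidirectProduct.inl_injective

theorem card_wreath_pow_eq_one [Finite Q] :
    Nat.card {w : W // w ^ p = 1} =
      Nat.card {q : Q // q ^ p = 1} ^ p + (p - 1) * Nat.card Q ^ (p - 1) := by
  classical
  rw [SemidirectProduct.card_subtype_eq_sum, Fintype.sum_eq_add_sum_compl 1,
    card_wreath_fiber_one_pow_eq_one]
  congr 1
  rw [Finset.sum_congr rfl fun g hg =>
      card_wreath_fiber_pow_eq_one (k := g.toAdd) (by simpa using hg),
    Finset.sum_const, smul_eq_mul, Finset.card_compl, Finset.card_singleton,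
    Fintype.card_multiplicative, ZMod.card]

end Wreath

/-- The number of elements of order `p` in the wreath product `Q ≀ ℤ/p` (`p` prime, `Q`
finite) is `(d+1)^p − 1 + (p−1)·|Q|^{p−1}`, where `d` is the number of elements of order
`p` in `Q`. -/
theorem card_orderp_wreath (p : ℕ) (hp : p.Prime) (Q : Type*) [Group Q] [Finite Q] :
    Nat.card {w : WreathCyc p Q // orderOf w = p} =
      (Nat.card {q : Q // orderOf q = p} + 1) ^ p - 1 +
        (p - 1) * Nat.card Q ^ (p - 1) := by
  have := Fact.mk hp
  have : Finite (WreathCyc p Q) := Finite.of_equiv _ SemidirectProduct.equivProd.symm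
  have hW := card_orderOf_eq_prime_add_one (G := WreathCyc p Q) (p := p)
  have hcount : Nat.card {w : WreathCyc p Q // w ^ p = 1} = _ := card_wreath_pow_eq_one
  have : Nonempty {q : Q // q ^ p = 1} := ⟨⟨1, one_pow p⟩⟩
  have := Nat.one_le_pow p _ (Nat.card_pos (α := {q : Q // q ^ p = 1}))
  rw [card_orderOf_eq_prime_add_one (p := p)]
  omega
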